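/- arXiv:2203.09971 — 3 statements merged into one kernel-verified Lean document; each statement's English description precedes it below -/
import Mathlib

section
/- Let m ≥ 2, let n ≥ 2 be even, and consider the preference profile V over m projects in which n/2 voters propose (1,0,…,0) and the other n/2 voters propose the uniform division (1/m,…,1/m). Then every moving phantom mechanism outputs the uniform division (1/m,…,1/m) on V. -/
open Finset

/-- A division among `m` projects: coordinates in `[0,1]` summing to `1`. -/
def IsDivision {m : ℕ} (x : Fin m → ℝ) : Prop :=
  (∀ j, 0 ≤ x j ∧ x j ≤ 1) ∧ ∑ j, x j = 1

/-- The ℓ1 distance between two vectors over `Fin m`. -/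
noncomputable def l1 {m : ℕ} (x y : Fin m → ℝ) : ℝ := ∑ j, |x j - y j|

/-- The proportional division (coordinatewise mean) of a profile. -/
noncomputable def propDiv {n m : ℕ} (V : Fin n → Fin m → ℝ) : Fin m → ℝ :=
  fun j => (∑ i, V i j) / (n : ℝ)

/-- The `(k+1)`-th smallest element of a multiset of reals. -/
noncomputable def medianAt (s : Multiset ℝ) (k : ℕ) : ℝ :=
  (s.sort (· ≤ ·)).getD k 0

/-- Voter reports on project `j` together with the `n+1` phantom values `p 0, …, p n`. -/
noncomputable def projValues {n m : ℕ} (V : Fin n → Fin m → ℝ)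
    (p : ℕ → ℝ) (j : Fin m) : Multiset ℝ :=
  (Multiset.map (fun i => V i j) Finset.univ.val) +
    (Multiset.map p (Finset.range (n + 1)).val)

/-- The median (the `(n+1)`-th smallest of the `2n+1` values) of the `n` voter reports
on project `j` together with the `n+1` phantom values. -/
noncomputable def phantomMedian {n m : ℕ} (V : Fin n → Fin m → ℝ)
    (p : ℕ → ℝ) (j : Fin m) : ℝ :=
  medianAt (projValues V p j) n

/-- A phantom system for `n` voters: continuous, weakly increasing functions
`y k : [0,1] → [0,1]`, `k = 0, …, n`, with `y k 0 = 0`, `y k 1 = 1`,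
pointwise ordered in `k`. -/
structure PhantomSystem (n : ℕ) where
  y : ℕ → ℝ → ℝ
  contOn : ∀ k ≤ n, ContinuousOn (y k) (Set.Icc 0 1)
  monoOn : ∀ k ≤ n, MonotoneOn (y k) (Set.Icc 0 1)
  mem_Icc : ∀ k ≤ n, ∀ t ∈ Set.Icc (0:ℝ) 1, y k t ∈ Set.Icc (0:ℝ) 1
  map_zero : ∀ k ≤ n, y k 0 = 0
  map_one : ∀ k ≤ n, y k 1 = 1
  mono_idx : ∀ t ∈ Set.Icc (0:ℝ) 1, ∀ k k', k ≤ k' → k' ≤ n → y k t ≤ y k' t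

/-- `f` is the moving phantom mechanism associated with the phantom system `Y`:
on each profile of divisions, for some `t*` making the medians sum to `1`,
it outputs on each project the median of the voter reports and the phantom values. -/
def IsMovingPhantom {n m : ℕ} (f : (Fin n → Fin m → ℝ) → (Fin m → ℝ))
    (Y : PhantomSystem n) : Prop :=
  ∀ V : Fin n → Fin m → ℝ, (∀ i, IsDivision (V i)) →
    ∃ t ∈ Set.Icc (0:ℝ) 1,
      (∑ j, phantomMedian V (fun k => Y.y k t) j) = 1 ∧
      ∀ j, f V j = phantomMedian V (fun k => Y.y k t) j

/-- Truthfulness of a budget aggregation mechanism: no voter `i` with true peak `V i`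
can get an outcome closer (in ℓ1 distance) to her peak by reporting some division `v`
instead of `V i`. -/
def Truthful {n m : ℕ} (f : (Fin n → Fin m → ℝ) → (Fin m → ℝ)) : Prop :=
  ∀ V : Fin n → Fin m → ℝ, (∀ i, IsDivision (V i)) →
    ∀ i : Fin n, ∀ v : Fin m → ℝ, IsDivision v →
      l1 (f V) (V i) ≤ l1 (f (Function.update V i v)) (V i)

/-- The ℓ1-loss of mechanism `f` on profile `V`. -/
noncomputable def loss {n m : ℕ} (f : (Fin n → Fin m → ℝ) → (Fin m → ℝ))
    (V : Fin n → Fin m → ℝ) : ℝ :=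
  l1 (f V) (propDiv V)

/-- The phantom system of the Piecewise Uniform mechanism for `n` voters. -/
noncomputable def puPhantom (n : ℕ) (k : ℕ) (t : ℝ) : ℝ :=
  if t < 1 / 2 then
    (if (k : ℝ) / (n : ℝ) < 1 / 2 then 0 else 4 * t * (k : ℝ) / (n : ℝ) - 2 * t)
  else
    (if (k : ℝ) / (n : ℝ) < 1 / 2 then (k : ℝ) * (2 * t - 1) / (n : ℝ)
     else (k : ℝ) * (3 - 2 * t) / (n : ℝ) - 2 + 2 * t)

/-- `w` is an output of the Piecewise Uniform mechanism on profile `V`. -/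
def IsPUOutcome {n m : ℕ} (V : Fin n → Fin m → ℝ) (w : Fin m → ℝ) : Prop :=
  ∃ t ∈ Set.Icc (0:ℝ) 1,
    (∑ j, phantomMedian V (fun k => puPhantom n k t) j) = 1 ∧
    ∀ j, w j = phantomMedian V (fun k => puPhantom n k t) j

/-- `w` is an output of the Independent Markets mechanism (phantoms `min (k·t) 1`)
on profile `V`. -/
def IsIMOutcome {n m : ℕ} (V : Fin n → Fin m → ℝ) (w : Fin m → ℝ) : Prop :=
  ∃ t : ℝ, 0 ≤ t ∧
    (∑ j, phantomMedian V (fun k => min ((k : ℝ) * t) 1) j) = 1 ∧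
    ∀ j, w j = phantomMedian V (fun k => min ((k : ℝ) * t) 1) j

/-- A single-minded division: it assigns the whole budget to one project. -/
def SingleMindedDiv {m : ℕ} (v : Fin m → ℝ) : Prop := ∃ j, v j = 1

/-- A double-minded division relative to an outcome `w` (three projects): it agrees with
`w` on one project `j`, proposes `1 - w j` on another project, and `0` on the third. -/
def DoubleMindedDiv (w v : Fin 3 → ℝ) : Prop :=
  ∃ j j' : Fin 3, j ≠ j' ∧ v j = w j ∧ v j' = 1 - w j ∧
    ∀ k, k ≠ j → k ≠ j' → v k = 0

/-- A three-type profile for mechanism `f`: each voter is fully-satisfied,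
double-minded, or single-minded. -/
def ThreeTypeProfile {n : ℕ} (f : (Fin n → Fin 3 → ℝ) → (Fin 3 → ℝ))
    (V : Fin n → Fin 3 → ℝ) : Prop :=
  ∀ i, V i = f V ∨ DoubleMindedDiv (f V) (V i) ∨ SingleMindedDiv (V i)

/-- The single-minded division fully supporting project `j`. -/
noncomputable def singleDiv (j : Fin 3) : Fin 3 → ℝ :=
  fun j' => if j' = j then 1 else 0

/-- The double-minded division proposing `x k` on project `k`, `1 - x k` on
project `j` and `0` on the remaining project. -/
noncomputable def doubleDiv (x : Fin 3 → ℝ) (k j : Fin 3) : Fin 3 → ℝ :=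
  fun j' => if j' = k then x k else if j' = j then 1 - x k else 0

/-- A utilitarian mechanism: it always returns a division minimizing the total
ℓ1 distance (social cost) to the voters' proposals. -/
def Utilitarian {n m : ℕ} (f : (Fin n → Fin m → ℝ) → (Fin m → ℝ)) : Prop :=
  ∀ V : Fin n → Fin m → ℝ, (∀ i, IsDivision (V i)) →
    IsDivision (f V) ∧
    ∀ x : Fin m → ℝ, IsDivision x → (∑ i, l1 (V i) (f V)) ≤ ∑ i, l1 (V i) x


/-! On the given profile at least half of the voters report `1 / m` on every project. If more
than half of the `n + 1` phantoms lie at or below `1 / m`, then on every project at least `n + 1`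
of the `2 n + 1` values are `≤ 1 / m`, so every median is `≤ 1 / m`; otherwise at most `n` values
are `< 1 / m` on every project and every median is `≥ 1 / m`. As the medians sum to
`1 = m • (1 / m)`, they all equal `1 / m`. -/

theorem medianAt_le_of_lt_countP {s : Multiset ℝ} {k : ℕ} {c : ℝ}
    (h : k < s.countP (· ≤ c)) : medianAt s k ≤ c := by
  set l := s.sort (· ≤ ·)
  have hsorted : l.SortedLE := (s.pairwise_sort _).sortedLE
  have hcount : k < l.countP (· ≤ c) := by
    rwa [← Multiset.coe_countP, Multiset.sort_eq]
  have hk : k < l.length := hcount.trans_le List.countP_le_length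
  rw [medianAt, List.getD_eq_getElem _ _ hk]
  by_contra! hlt
  -- everything from position `k` on is `> c`, so only the first `k` entries can be `≤ c`
  have hdrop : (l.drop k).countP (· ≤ c) = 0 := by
    refine List.countP_eq_zero.mpr fun x hx => ?_
    obtain ⟨i, hi, rfl⟩ := List.getElem_of_mem hx
    rw [List.getElem_drop]
    simpa using hlt.trans_le (hsorted.getElem_le_getElem_of_le (Nat.le_add_right k i))
  have hsplit :=
    List.countP_append (l₁ := l.take k) (l₂ := l.drop k) (p := fun x => decide (x ≤ c))
  rw [List.take_append_drop, hdrop] at hsplit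
  have := (l.take k).countP_le_length (p := fun x => decide (x ≤ c))
  simp only [List.length_take] at this
  omega

theorem le_medianAt_of_countP_le {s : Multiset ℝ} {k : ℕ} {c : ℝ} (hk : k < s.card)
    (h : s.countP (· < c) ≤ k) : c ≤ medianAt s k := by
  set l := s.sort (· ≤ ·)
  have hsorted : l.SortedLE := (s.pairwise_sort _).sortedLE
  have hcount : l.countP (· < c) ≤ k := by
    rwa [← Multiset.coe_countP, Multiset.sort_eq]
  have hk : k < l.length := by rwa [Multiset.length_sort]
  rw [medianAt, List.getD_eq_getElem _ _ hk]
  by_contra! hlt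
  -- the first `k + 1` entries are all `≤ l[k] < c`
  have htake : (l.take (k + 1)).countP (· < c) = k + 1 := by
    rw [List.countP_eq_length.mpr, List.length_take]
    · omega
    intro x hx
    obtain ⟨i, hi, rfl⟩ := List.getElem_of_mem hx
    rw [List.getElem_take]
    simp only [List.length_take] at hi
    simpa using (hsorted.getElem_le_getElem_of_le (by omega : i ≤ k)).trans_lt hlt
  have := (List.take_sublist (k + 1) l).countP_le (p := fun x => decide (x < c))
  omega

section PhantomMedian

variable {n m : ℕ} (V : Fin n → Fin m → ℝ) (p : ℕ → ℝ) (j : Fin m)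

theorem card_projValues : (projValues V p j).card = 2 * n + 1 := by
  simp only [projValues, Multiset.card_add, Multiset.card_map, card_val, card_univ,
    Fintype.card_fin, card_range]
  omega

theorem countP_projValues (q : ℝ → Prop) [DecidablePred q] :
    (projValues V p j).countP q = #{i | q (V i j)} + #{k ∈ range (n + 1) | q (p k)} := by
  simp only [projValues, Multiset.countP_add, Multiset.countP_map, Finset.card,
    ← Finset.filter_val]

/-- Which side of `c` the medians fall on is decided, for all projects at once, by whether more
than half of the phantoms are `≤ c`. -/
theorem phantomMedian_le_or_ge {c : ℝ} (hV : ∀ j, n ≤ 2 * #{i | V i j = c}) :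
    (∀ j, phantomMedian V p j ≤ c) ∨ (∀ j, c ≤ phantomMedian V p j) := by
  by_cases hp : n < 2 * #{k ∈ range (n + 1) | p k ≤ c}
  · refine Or.inl fun j => medianAt_le_of_lt_countP ?_
    have hle : #{i | V i j = c} ≤ #{i | V i j ≤ c} :=
      card_le_card (monotone_filter_right _ fun _ _ => le_of_eq)
    have := hV j
    rw [countP_projValues]
    omega
  · refine Or.inr fun j => le_medianAt_of_countP_le (by rw [card_projValues]; omega) ?_
    have hvoters : #{i | V i j < c} + #{i | V i j = c} ≤ n := by
      rw [← card_union_of_disjoint (disjoint_filter.mpr fun _ _ h => h.ne)]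
      exact (card_le_univ _).trans_eq (Fintype.card_fin n)
    have hphantoms : #{k ∈ range (n + 1) | p k < c} ≤ #{k ∈ range (n + 1) | p k ≤ c} :=
      card_le_card (monotone_filter_right _ fun _ _ => le_of_lt)
    have := hV j
    rw [countP_projValues]
    omega

end PhantomMedian

theorem eq_of_sum_eq_of_le_or_ge {ι M : Type*} [Fintype ι] [AddCommMonoid M] [PartialOrder M]
    [IsOrderedCancelAddMonoid M] {x : ι → M} {c : M} (hsum : ∑ i, x i = ∑ _i : ι, c)
    (h : (∀ i, x i ≤ c) ∨ (∀ i, c ≤ x i)) (i : ι) : x i = c := by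
  rcases h with h | h
  · exact (sum_eq_sum_iff_of_le fun i _ => h i).mp hsum i (mem_univ i)
  · exact ((sum_eq_sum_iff_of_le fun i _ => h i).mp hsum.symm i (mem_univ i)).symm

theorem isDivision_const_inv {m : ℕ} (hm : 0 < m) :
    IsDivision (fun _ : Fin m => 1 / (m : ℝ)) := by
  have hm' : (1 : ℝ) ≤ m := by exact_mod_cast hm
  refine ⟨fun _ => ⟨by positivity, div_le_one_of_le₀ hm' (by positivity)⟩, ?_⟩
  simp [sum_const, (by positivity : (m : ℝ) ≠ 0)]

theorem isDivision_ite_val_eq_zero {m : ℕ} (hm : 0 < m) :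
    IsDivision (fun j : Fin m => if (j : ℕ) = 0 then (1 : ℝ) else 0) := by
  refine ⟨fun j => by dsimp only; split_ifs <;> norm_num, ?_⟩
  rw [sum_eq_single_of_mem (⟨0, hm⟩ : Fin m) (mem_univ _)
    fun j _ hj => if_neg (Fin.val_ne_iff.mpr hj)]
  simp

noncomputable def firstOrUniformProfile (n m : ℕ) : Fin n → Fin m → ℝ :=
  fun i j => if (i : ℕ) < n / 2 then (if (j : ℕ) = 0 then 1 else 0) else 1 / (m : ℝ)

theorem isDivision_firstOrUniformProfile {n m : ℕ} (hm : 0 < m) (i : Fin n) :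
    IsDivision (firstOrUniformProfile n m i) := by
  unfold firstOrUniformProfile
  split_ifs
  · exact isDivision_ite_val_eq_zero hm
  · exact isDivision_const_inv hm

theorem le_two_mul_card_firstOrUniformProfile_eq {n m : ℕ} (j : Fin m) :
    n ≤ 2 * #{i | firstOrUniformProfile n m i j = 1 / (m : ℝ)} := by
  have hsub : univ.filter (fun i : Fin n => ¬ (i : ℕ) < n / 2) ⊆
      univ.filter (fun i => firstOrUniformProfile n m i j = 1 / (m : ℝ)) :=
    monotone_filter_right _ fun i _ hi => by simp [firstOrUniformProfile, hi]
  have hsplit := card_filter_add_card_filter_not (s := (univ : Finset (Fin n)))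
    (p := fun i : Fin n => (i : ℕ) < n / 2)
  rw [Fin.card_filter_val_lt, card_univ, Fintype.card_fin] at hsplit
  have := card_le_card hsub
  omega

theorem moving_phantom_uniform_output_general {m n : ℕ} (hm : 2 ≤ m)
    (f : (Fin n → Fin m → ℝ) → (Fin m → ℝ)) (Y : PhantomSystem n)
    (hf : IsMovingPhantom f Y) :
    f (fun i j => if (i : ℕ) < n / 2 then (if (j : ℕ) = 0 then 1 else 0)
        else 1 / (m : ℝ))
      = fun _ => 1 / (m : ℝ) := by
  obtain ⟨t, -, hsum, hf⟩ :=
    hf (firstOrUniformProfile n m) (isDivision_firstOrUniformProfile (by omega))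
  have hsum' : ∑ j, phantomMedian (firstOrUniformProfile n m) (Y.y · t) j
      = ∑ _j : Fin m, 1 / (m : ℝ) := by
    rw [hsum, (isDivision_const_inv (by omega)).2]
  funext j
  exact (hf j).trans <| eq_of_sum_eq_of_le_or_ge hsum'
    (phantomMedian_le_or_ge _ _ le_two_mul_card_firstOrUniformProfile_eq) j

/-- On the profile where `n/2` voters propose `(1,0,…,0)` and the other
`n/2` voters propose the uniform division `(1/m,…,1/m)`, every moving phantom
mechanism outputs the uniform division. -/
theorem moving_phantom_uniform_output {m n : ℕ} (hm : 2 ≤ m) (hn : 2 ≤ n) (he : Even n)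
    (f : (Fin n → Fin m → ℝ) → (Fin m → ℝ)) (Y : PhantomSystem n)
    (hf : IsMovingPhantom f Y) :
    f (fun i j => if (i : ℕ) < n / 2 then (if (j : ℕ) = 0 then 1 else 0)
        else 1 / (m : ℝ))
      = fun _ => 1 / (m : ℝ) :=
  moving_phantom_uniform_output_general hm f Y hf
end

section
/- For every m ≥ 3 and every utilitarian budget aggregation mechanism f over m projects with m+1 voters, there exists a preference profile V with ℓ1-loss ℓ(V) = 2 − 4/(m+1). Concretely, on the profile where voter i proposes the single-minded division e_i (1 on project i) for i = 1,…,m and voter m+1 proposes e_1, the loss equals 2 − 4/(m+1). -/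
/-!
Against a profile of single-minded voters the social cost of a division `x` is
`2n - 2 ∑ᵢ x (top i)`, so a utilitarian mechanism maximizes the total share its output gives to
the voters' favourite projects. Project `0` has two supporters and every other project one, so
the output is the whole budget on project `0`, whereas the proportional division gives project
`0` only `2/(m+1)`; the ℓ1 distance between them is `2 - 2 · 2/(m+1)`.
-/

open Finset

lemma isDivision_single {m : ℕ} (j : Fin m) : IsDivision (Pi.single j 1 : Fin m → ℝ) := by
  refine ⟨fun k => ?_, by simp [sum_pi_single']⟩
  rw [Pi.single_apply]
  split_ifs <;> norm_num

lemma l1_single_one {m : ℕ} {x : Fin m → ℝ} (hx : IsDivision x) (j : Fin m) :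
    l1 (Pi.single j 1) x = 2 - 2 * x j := by
  have hrest : ∑ k ∈ univ.erase j, x k = 1 - x j := by
    linarith [add_sum_erase univ x (mem_univ j), hx.2]
  have hoff : ∀ k ∈ univ.erase j, |(Pi.single j 1 : Fin m → ℝ) k - x k| = x k := fun k hk => by
    rw [Pi.single_eq_of_ne (ne_of_mem_erase hk), zero_sub, abs_neg, abs_of_nonneg (hx.1 k).1]
  rw [l1, ← add_sum_erase _ _ (mem_univ j), sum_congr rfl hoff, hrest, Pi.single_eq_same,
    abs_of_nonneg (sub_nonneg.2 (hx.1 j).2)]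
  ring

lemma IsDivision.eq_single_of_one_le {m : ℕ} {x : Fin m → ℝ} (hx : IsDivision x) {j : Fin m}
    (hj : 1 ≤ x j) : x = Pi.single j 1 := by
  have hzero : l1 (Pi.single j 1) x = 0 :=
    le_antisymm (by rw [l1_single_one hx]; linarith) (sum_nonneg fun k _ => abs_nonneg _)
  funext k
  have hk := (sum_eq_zero_iff_of_nonneg fun k _ => abs_nonneg _).1 hzero k (mem_univ k)
  linarith [abs_eq_zero.1 hk]

lemma isDivision_propDiv {n m : ℕ} [NeZero n] {V : Fin n → Fin m → ℝ}
    (hV : ∀ i, IsDivision (V i)) : IsDivision (propDiv V) := by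
  have hn : (0 : ℝ) < n := Nat.cast_pos.2 (NeZero.pos n)
  refine ⟨fun j => ⟨div_nonneg (sum_nonneg fun i _ => ((hV i).1 j).1) hn.le, ?_⟩, ?_⟩
  · rw [propDiv, div_le_one hn]
    calc ∑ i, V i j ≤ ∑ _i : Fin n, (1 : ℝ) := sum_le_sum fun i _ => ((hV i).1 j).2
      _ = n := by simp
  · simp only [propDiv, ← sum_div]
    rw [sum_comm, sum_congr rfl fun i _ => (hV i).2]
    simp [hn.ne']

lemma sum_l1_single_one {n m : ℕ} (top : Fin n → Fin m) {x : Fin m → ℝ} (hx : IsDivision x) :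
    ∑ i, l1 (Pi.single (top i) 1) x = 2 * n - 2 * ∑ i, x (top i) := by
  simp only [l1_single_one hx, sum_sub_distrib, ← mul_sum]
  simp [mul_comm]

lemma Utilitarian.sum_apply_top_le {n m : ℕ} {f : (Fin n → Fin m → ℝ) → (Fin m → ℝ)}
    (hf : Utilitarian f) (top : Fin n → Fin m) {x : Fin m → ℝ} (hx : IsDivision x) :
    ∑ i, x (top i) ≤ ∑ i, f (fun i => Pi.single (top i) 1) (top i) := by
  obtain ⟨hdiv, hmin⟩ := hf _ fun i => isDivision_single (top i)
  have hcost := hmin x hx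
  rw [sum_l1_single_one top hdiv, sum_l1_single_one top hx] at hcost
  linarith

lemma sum_fin_succ_ofNat {M : Type*} [AddCommMonoid M] {m : ℕ} [NeZero m] (G : Fin m → M) :
    ∑ i : Fin (m + 1), G (Fin.ofNat m i) = G 0 + ∑ j, G j := by
  rw [Fin.sum_univ_castSucc, add_comm]
  congr 1
  · congr 1
    ext
    simp
  · refine sum_congr rfl fun j _ => congrArg G ?_
    ext
    simp

/-- For every `m ≥ 3` and every utilitarian mechanism over `m` projects
with `m + 1` voters, on the profile where voter `i` proposes the basis division
`e (i % m)` (so project `0` is supported twice and every other project once), the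
ℓ1-loss equals `2 - 4/(m+1)`. -/
theorem utilitarian_lower_bound (m : ℕ) (hm : 3 ≤ m)
    (f : (Fin (m + 1) → Fin m → ℝ) → (Fin m → ℝ)) (hf : Utilitarian f) :
    l1 (f (fun (i : Fin (m + 1)) (j : Fin m) => if (i : ℕ) % m = (j : ℕ) then 1 else 0))
       (propDiv (fun (i : Fin (m + 1)) (j : Fin m) =>
          if (i : ℕ) % m = (j : ℕ) then 1 else 0))
      = 2 - 4 / ((m : ℝ) + 1) := by
  have : NeZero m := ⟨by omega⟩
  have hprofile :
      (fun (i : Fin (m + 1)) (j : Fin m) => if (i : ℕ) % m = (j : ℕ) then (1 : ℝ) else 0) =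
        fun i : Fin (m + 1) => Pi.single (Fin.ofNat m i) 1 := by
    funext i j
    simp [Pi.single_apply, Fin.ext_iff, eq_comm]
  set V : Fin (m + 1) → Fin m → ℝ := fun i => Pi.single (Fin.ofNat m i) 1
  have hVdiv : ∀ i, IsDivision (V i) := fun i => isDivision_single _
  have hfV : f V = Pi.single 0 1 := by
    have hdiv := (hf V hVdiv).1
    have hle := hf.sum_apply_top_le (fun i : Fin (m + 1) => Fin.ofNat m i) (isDivision_single 0)
    rw [sum_fin_succ_ofNat, sum_fin_succ_ofNat (G := f V), hdiv.2, sum_pi_single'] at hle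
    simp only [Pi.single_eq_same, mem_univ, if_true] at hle
    exact hdiv.eq_single_of_one_le (by linarith)
  have hprop : propDiv V 0 = 2 / ((m : ℝ) + 1) := by
    simp only [propDiv, V, sum_fin_succ_ofNat (fun k => Pi.single k (1 : ℝ) 0), sum_pi_single]
    norm_num
  rw [hprofile, hfV, l1_single_one (isDivision_propDiv hVdiv), hprop]
  ring
end

section
/- Let m ≥ 3, n ≥ 1, and let V be an arbitrary preference profile of n voters over m projects. For each project j, let x_j be the median of the 2n+1 values v_{1,j},…,v_{n,j}, 0, 1/n, 2/n, …, 1 (the n voter reports on project j together with the n+1 uniformly spaced phantom values k/n, k = 0,…,n). Then Σ_{j=1}^m x_j ≥ 1. -/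
open Finset

/-!
Let `x` be the vector of medians. If some voter's report is dominated coordinatewise by `x`,
then `∑ x_j ≥ ∑ v_ij = 1`. Otherwise every voter lies strictly above `x` on some project, so
`n ≤ ∑_j #{i | x_j < v_ij}`. On project `j` at most `n` of the `2n+1` values exceed the median,
and `n - ⌊n x_j⌋` phantoms already do, so at most `n x_j` voters exceed `x_j`; summing gives
`n ≤ n ∑ x_j`.
-/

theorem Multiset.succ_le_countP_le_medianAt (s : Multiset ℝ) {k : ℕ}
    (hk : k < Multiset.card s) :
    k + 1 ≤ s.countP (· ≤ medianAt s k) := by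
  set l := s.sort (· ≤ ·)
  have hkl : k < l.length := by rwa [Multiset.length_sort]
  have hmed : medianAt s k = l[k] := List.getD_eq_getElem _ _ hkl
  have htake : ∀ a ∈ l.take (k + 1), a ≤ l[k] := by
    intro a ha
    obtain ⟨i, hi, rfl⟩ := List.mem_iff_getElem.1 ha
    rw [List.length_take, lt_min_iff] at hi
    rw [List.getElem_take]
    exact (s.pairwise_sort (· ≤ ·)).rel_get_of_le (a := ⟨i, hi.2⟩) (b := ⟨k, hkl⟩)
      (Nat.le_of_lt_succ hi.1)
  calc k + 1 = (l.take (k + 1)).countP (· ≤ l[k]) := by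
        rw [List.countP_eq_length.2 (by simpa using htake), List.length_take]; omega
    _ ≤ l.countP (· ≤ l[k]) := (List.take_sublist _ _).countP_le
    _ = s.countP (· ≤ medianAt s k) := by
        rw [hmed, ← Multiset.coe_countP, Multiset.sort_eq]

section PhantomMedian

variable {n m : ℕ} (V : Fin n → Fin m → ℝ) (p : ℕ → ℝ) (j : Fin m)

theorem card_lt_phantomMedian_add_one_le :
    #{i | phantomMedian V p j < V i j} + 1 ≤
      #{k ∈ range (n + 1) | p k ≤ phantomMedian V p j} := by
  set x := phantomMedian V p j
  have hcount : n + 1 ≤ (projValues V p j).countP (· ≤ x) :=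
    Multiset.succ_le_countP_le_medianAt _ (by simp [projValues])
  have hsplit : (projValues V p j).countP (· ≤ x) =
      #{i | V i j ≤ x} + #{k ∈ range (n + 1) | p k ≤ x} := by
    simp only [projValues, Multiset.countP_add, Multiset.countP_map]
    rfl
  have hvoters : #{i | V i j ≤ x} + #{i | x < V i j} = n := by
    simpa only [not_le, card_univ, Fintype.card_fin] using
      card_filter_add_card_filter_not (s := univ) (fun i : Fin n => V i j ≤ x)
  omega

theorem exists_phantom_le_phantomMedian :
    ∃ k ≤ n, p k ≤ phantomMedian V p j := by
  obtain ⟨k, hk⟩ := card_pos.1 (Nat.succ_le_iff.1 (le_of_add_le_right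
    (card_lt_phantomMedian_add_one_le V p j)))
  rw [mem_filter, mem_range] at hk
  exact ⟨k, by omega, hk.2⟩

end PhantomMedian

theorem card_uniform_phantom_le_floor {n : ℕ} (hn : 0 < n) (x : ℝ) :
    #{k ∈ range (n + 1) | ((k : ℕ) : ℝ) / n ≤ x} ≤ ⌊n * x⌋₊ + 1 := by
  have hsub : {k ∈ range (n + 1) | ((k : ℕ) : ℝ) / n ≤ x} ⊆ range (⌊n * x⌋₊ + 1) := by
    intro k hk
    rw [mem_filter, div_le_iff₀ (by exact_mod_cast hn)] at hk
    exact mem_range.2 (Nat.lt_succ_of_le (Nat.le_floor (by linarith [hk.2])))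
  simpa using card_le_card hsub

section UniformPhantom

variable {n m : ℕ} (V : Fin n → Fin m → ℝ) (j : Fin m)

theorem uniform_phantomMedian_nonneg (hn : 0 < n) :
    0 ≤ phantomMedian V (fun k => (k : ℝ) / n) j := by
  obtain ⟨k, -, hk⟩ := exists_phantom_le_phantomMedian V (fun k => (k : ℝ) / n) j
  exact le_trans (by positivity) hk

theorem card_lt_uniform_phantomMedian_le (hn : 0 < n) :
    (#{i | phantomMedian V (fun k => (k : ℝ) / n) j < V i j} : ℝ) ≤
      n * phantomMedian V (fun k => (k : ℝ) / n) j := by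
  have hcard := (card_lt_phantomMedian_add_one_le V _ j).trans
    (card_uniform_phantom_le_floor hn (phantomMedian V (fun k => (k : ℝ) / n) j))
  calc _ ≤ (⌊n * phantomMedian V (fun k => (k : ℝ) / n) j⌋₊ : ℝ) := by
        exact_mod_cast Nat.le_of_add_le_add_right hcard
    _ ≤ _ := Nat.floor_le (mul_nonneg n.cast_nonneg (uniform_phantomMedian_nonneg V j hn))

end UniformPhantom

theorem uniform_phantom_sum_ge_one_general (m n : ℕ) (hn : 1 ≤ n)
    (V : Fin n → Fin m → ℝ) (hV : ∀ i, IsDivision (V i)) :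
    1 ≤ ∑ j, phantomMedian V (fun k => (k : ℝ) / (n : ℝ)) j := by
  set x := fun j => phantomMedian V (fun k => (k : ℝ) / (n : ℝ)) j
  by_cases hdom : ∃ i, ∀ j, V i j ≤ x j
  · obtain ⟨i, hi⟩ := hdom
    exact (hV i).2.symm.le.trans (sum_le_sum fun j _ => hi j)
  · push Not at hdom
    have hcover : (univ : Finset (Fin n)) ⊆ univ.biUnion fun j => {i | x j < V i j} := by
      intro i _
      obtain ⟨j, hj⟩ := hdom i
      exact mem_biUnion.2 ⟨j, mem_univ j, by simpa using hj⟩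
    have hcard : n ≤ ∑ j, #{i | x j < V i j} := by
      simpa using (card_le_card hcover).trans card_biUnion_le
    have hnpos : (0 : ℝ) < n := by exact_mod_cast hn
    have hscaled : (n : ℝ) * 1 ≤ n * ∑ j, x j := by
      rw [mul_one, mul_sum]
      calc (n : ℝ) ≤ ∑ j, (#{i | x j < V i j} : ℝ) := by exact_mod_cast hcard
        _ ≤ _ := sum_le_sum fun j _ => card_lt_uniform_phantomMedian_le V j hn
    exact le_of_mul_le_mul_left hscaled hnpos

/-- For `m ≥ 3` projects, applying the Uniform Phantom computation
(phantoms `k/n`, `k = 0, …, n`) coordinatewise to any preference profile yields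
per-project medians summing to at least `1`. -/
theorem uniform_phantom_sum_ge_one (m n : ℕ) (hm : 3 ≤ m) (hn : 1 ≤ n)
    (V : Fin n → Fin m → ℝ) (hV : ∀ i, IsDivision (V i)) :
    1 ≤ ∑ j, phantomMedian V (fun k => (k : ℝ) / (n : ℝ)) j :=
  uniform_phantom_sum_ge_one_general m n hn V hV
end
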